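/- Let 0 < ν < 1 and 0 < s_p < 1 and set s = ν·s_p. Let D₁ : I×I → ℝ≥0 be a symmetric squared-distance function with D₁(i,i)=0 that has the √s-multiplicative-perturbation-robustness property with unique optimal partition 𝔠*. Let D₂ be a symmetric function with D₂(i,i)=0 and ν·D₁(i,j) ≤ D₂(i,j) ≤ (1/ν)·D₁(i,j) for all i ≠ j. Then D₂ has the √s_p-multiplicative-perturbation-robustness property, with the same optimal partition 𝔠*. -/

import Mathlib

open Finset

variable {I : Type*} [Fintype I] [DecidableEq I]

/-- Cost of a partition with respect to an abstract squared-distance function `D`. -/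
noncomputable def costD (D : I → I → ℝ) (c : Finpartition (univ : Finset I)) : ℝ :=
  ∑ C ∈ c.parts, (1 / (2 * (C.card : ℝ))) * ∑ i ∈ C, ∑ j ∈ C, D i j

/-- `c` is the unique minimizer of `costD D'` over partitions into at most `k` nonempty
blocks, for every symmetric nonnegative `D'` vanishing on the diagonal with
`s·D ≤ D' ≤ (1/s)·D` off the diagonal.  `D` has the √s-multiplicative-perturbation-robustness
property iff such a partition `c` with at most `k` blocks exists. -/
def robustUniqueOpt (k : ℕ) (s : ℝ) (D : I → I → ℝ)
    (c : Finpartition (univ : Finset I)) : Prop :=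
  c.parts.card ≤ k ∧
  ∀ D' : I → I → ℝ, (∀ i j, D' j i = D' i j) → (∀ i, D' i i = 0) → (∀ i j, 0 ≤ D' i j) →
    (∀ i j, i ≠ j → s * D i j ≤ D' i j ∧ D' i j ≤ (1 / s) * D i j) →
    ∀ d : Finpartition (univ : Finset I), d.parts.card ≤ k → d ≠ c →
      costD D' c < costD D' d

def IsMulPerturbation {α : Type*} (s : ℝ) (D D' : α → α → ℝ) : Prop :=
  ∀ i j, i ≠ j → s * D i j ≤ D' i j ∧ D' i j ≤ (1 / s) * D i j

theorem IsMulPerturbation.trans {α : Type*} {ν s : ℝ} (hs : 0 ≤ s) {D₁ D₂ D₃ : α → α → ℝ}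
    (h₁₂ : IsMulPerturbation ν D₁ D₂) (h₂₃ : IsMulPerturbation s D₂ D₃) :
    IsMulPerturbation (ν * s) D₁ D₃ := by
  intro i j hij
  obtain ⟨hlo₁₂, hup₁₂⟩ := h₁₂ i j hij
  obtain ⟨hlo₂₃, hup₂₃⟩ := h₂₃ i j hij
  constructor
  · calc ν * s * D₁ i j = s * (ν * D₁ i j) := by ring
      _ ≤ s * D₂ i j := by gcongr
      _ ≤ D₃ i j := hlo₂₃
  · calc D₃ i j ≤ (1 / s) * D₂ i j := hup₂₃
      _ ≤ (1 / s) * ((1 / ν) * D₁ i j) := by gcongr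
      _ = (1 / (ν * s)) * D₁ i j := by rw [← mul_assoc, one_div_mul_one_div, mul_comm s ν]

theorem robustUniqueOpt.of_isMulPerturbation_imp {k : ℕ} {s t : ℝ} {D₁ D₂ : I → I → ℝ}
    {c : Finpartition (univ : Finset I)}
    (hpert : ∀ D', IsMulPerturbation s D₂ D' → IsMulPerturbation t D₁ D')
    (hrob : robustUniqueOpt k t D₁ c) : robustUniqueOpt k s D₂ c :=
  ⟨hrob.1, fun D' hsymm hdiag hnonneg hD' => hrob.2 D' hsymm hdiag hnonneg (hpert D' hD')⟩

theorem double_perturbation_general {I : Type*} [Fintype I] [DecidableEq I] (k : ℕ)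
    {ν sp : ℝ} (hsp0 : 0 < sp)
    (D₁ D₂ : I → I → ℝ)
    (hpert : ∀ i j, i ≠ j → ν * D₁ i j ≤ D₂ i j ∧ D₂ i j ≤ (1 / ν) * D₁ i j)
    (cstar : Finpartition (univ : Finset I))
    (hrob : robustUniqueOpt k (ν * sp) D₁ cstar) :
    robustUniqueOpt k sp D₂ cstar :=
  hrob.of_isMulPerturbation_imp fun _ hD' => IsMulPerturbation.trans hsp0.le hpert hD'

/-- A `ν`-multiplicative perturbation of a `√(ν·s_p)`-multiplicatively-perturbation-robust
squared-distance function is itself `√s_p`-multiplicatively-perturbation-robust, with the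
same unique optimal partition. -/
theorem double_perturbation {I : Type*} [Fintype I] [DecidableEq I] (k : ℕ) (hk : 1 ≤ k)
    {ν sp : ℝ} (hν0 : 0 < ν) (hν1 : ν < 1) (hsp0 : 0 < sp) (hsp1 : sp < 1)
    (D₁ D₂ : I → I → ℝ)
    (hD₁symm : ∀ i j, D₁ j i = D₁ i j) (hD₁diag : ∀ i, D₁ i i = 0)
    (hD₁nonneg : ∀ i j, 0 ≤ D₁ i j)
    (hD₂symm : ∀ i j, D₂ j i = D₂ i j) (hD₂diag : ∀ i, D₂ i i = 0)
    (hD₂nonneg : ∀ i j, 0 ≤ D₂ i j)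
    (hpert : ∀ i j, i ≠ j → ν * D₁ i j ≤ D₂ i j ∧ D₂ i j ≤ (1 / ν) * D₁ i j)
    (cstar : Finpartition (univ : Finset I))
    (hrob : robustUniqueOpt k (ν * sp) D₁ cstar) :
    robustUniqueOpt k sp D₂ cstar :=
  double_perturbation_general k hsp0 D₁ D₂ hpert cstar hrob
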